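/- Let ε ∈ [0,1], λ > 0, n ≥ 2, and for the Po2-ε scheme define r_i⁺(Q) = (2λ/(n−1))·Σ_{j≠i} p(Q_i,Q_j) with p(Q_i,Q_j) = (1−ε)1{Q_i<Q_j} + ε1{Q_i>Q_j} + 1{Q_i=Q_j, i<j}. Then Σ_{i=1}^n r_i⁺(Q)·Q_i ≤ λ·max(1,2ε)·Σ_{i=1}^n Q_i for all Q ∈ ℤ_+^n. -/

import Mathlib

/-!
Summing `p(Q_i, Q_j) Q_i` over ordered pairs `i ≠ j` and symmetrising, each unordered pair
contributes `p(Q_i, Q_j) Q_i + p(Q_j, Q_i) Q_j`: since the two probabilities sum to one, this is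
`(1 - ε) min + ε max` (or `Q_i` on a tie), which is at most `max 1 (2ε) / 2 · (Q_i + Q_j)`.
Summing this over all pairs gives `max 1 (2ε) (n - 1) Σ Q_i`, and the factor `2λ / (n - 1)`
in `r_i⁺` turns it into the bound.
-/

open Finset

/-- Join probability under the Po2-ε scheme. -/
noncomputable def pEps (ε : ℝ) {n : ℕ} (qi qj : ℕ) (i j : Fin n) : ℝ :=
  (1 - ε) * (if qi < qj then 1 else 0) + ε * (if qj < qi then 1 else 0)
  + (if qi = qj ∧ i < j then 1 else 0)

/-- Arrival rate to server i under the Po2-ε scheme. -/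
noncomputable def rPlusEps (lam ε : ℝ) {n : ℕ} (Q : Fin n → ℕ) (i : Fin n) : ℝ :=
  (2 * lam / ((n : ℝ) - 1)) * ∑ j ∈ Finset.univ.erase i, pEps ε (Q i) (Q j) i j

section OffDiagonal

variable {ι M : Type*} [Fintype ι] [DecidableEq ι] [AddCommMonoid M]

theorem Finset.sum_sum_erase_comm (f : ι → ι → M) :
    ∑ i, ∑ j ∈ univ.erase i, f i j = ∑ i, ∑ j ∈ univ.erase i, f j i :=
  Finset.sum_comm' fun _ _ => by simp [ne_comm]

theorem Finset.sum_sum_erase_add (x : ι → M) :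
    ∑ i, ∑ j ∈ univ.erase i, (x i + x j) = (2 * (Fintype.card ι - 1)) • ∑ i, x i := by
  have hdiag (i : ι) : ∑ _j ∈ univ.erase i, x i = (Fintype.card ι - 1) • x i := by
    rw [sum_const, card_erase_of_mem (mem_univ i), card_univ]
  simp only [sum_add_distrib]
  rw [sum_sum_erase_comm fun _ j => x j, ← two_nsmul, mul_nsmul', smul_sum]
  simp only [hdiag, smul_sum]

end OffDiagonal

section JoinProbability

variable (ε : ℝ) {n : ℕ} {a b : ℕ} (i j : Fin n)

theorem pEps_of_lt (h : a < b) : pEps ε a b i j = 1 - ε := by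
  simp [pEps, h, h.not_gt, h.ne]

theorem pEps_of_gt (h : b < a) : pEps ε a b i j = ε := by
  simp [pEps, h, h.not_gt, h.ne']

theorem pEps_self (a : ℕ) : pEps ε a a i j = if i < j then 1 else 0 := by
  simp [pEps]

end JoinProbability

theorem one_sub_mul_add_mul_le_max {ε a b : ℝ} (ha : 0 ≤ a) (hab : a ≤ b) :
    (1 - ε) * a + ε * b ≤ max 1 (2 * ε) / 2 * (a + b) := by
  rcases le_total ε (1 / 2) with h | h
  · rw [max_eq_left (by linarith)]
    nlinarith
  · rw [max_eq_right (by linarith)]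
    nlinarith

theorem pEps_mul_add_pEps_mul_le (ε : ℝ) {n : ℕ} (a b : ℕ) {i j : Fin n} (hij : i ≠ j) :
    pEps ε a b i j * a + pEps ε b a j i * b ≤ max 1 (2 * ε) / 2 * (a + b) := by
  rcases lt_trichotomy a b with h | rfl | h
  · rw [pEps_of_lt ε i j h, pEps_of_gt ε j i h]
    exact one_sub_mul_add_mul_le_max (Nat.cast_nonneg a) (by exact_mod_cast h.le)
  · rw [pEps_self, pEps_self]
    have hM : (1 : ℝ) ≤ max 1 (2 * ε) := le_max_left _ _
    rcases hij.lt_or_gt with h | h <;>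
      simp only [h, h.not_gt, if_true, if_false] <;> nlinarith [(a.cast_nonneg : (0 : ℝ) ≤ a)]
  · rw [pEps_of_gt ε i j h, pEps_of_lt ε j i h, add_comm, add_comm (a : ℝ)]
    exact one_sub_mul_add_mul_le_max (Nat.cast_nonneg b) (by exact_mod_cast h.le)

theorem po2eps_arrival_rate_bound_general (ε lam : ℝ)
    (hlam : 0 < lam) (n : ℕ) (hn : 2 ≤ n) (Q : Fin n → ℕ) :
    ∑ i, rPlusEps lam ε Q i * (Q i : ℝ)
      ≤ lam * max 1 (2 * ε) * ∑ i, (Q i : ℝ) := by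
  set M := max 1 (2 * ε)
  set S := ∑ i, ∑ j ∈ univ.erase i, pEps ε (Q i) (Q j) i j * Q i
  have hn1 : (0 : ℝ) < n - 1 := by
    have : (2 : ℝ) ≤ n := by exact_mod_cast hn
    linarith
  have hcard : ((n - 1 : ℕ) : ℝ) = n - 1 := by
    rw [Nat.cast_sub (by omega), Nat.cast_one]
  have hS : 2 * S ≤ M * (n - 1) * ∑ i, (Q i : ℝ) :=
    calc 2 * S = ∑ i, ∑ j ∈ univ.erase i,
          (pEps ε (Q i) (Q j) i j * Q i + pEps ε (Q j) (Q i) j i * Q j) := by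
          simp only [S, two_mul, sum_add_distrib]
          rw [sum_sum_erase_comm fun i j => pEps ε (Q i) (Q j) i j * Q i]
      _ ≤ ∑ i, ∑ j ∈ univ.erase i, M / 2 * ((Q i : ℝ) + Q j) :=
          sum_le_sum fun i _ => sum_le_sum fun j hj =>
            pEps_mul_add_pEps_mul_le ε _ _ (ne_of_mem_erase hj).symm
      _ = M * (n - 1) * ∑ i, (Q i : ℝ) := by
          simp only [← mul_sum]
          rw [sum_sum_erase_add, nsmul_eq_mul, Fintype.card_fin]
          push_cast [hcard]
          ring
  calc ∑ i, rPlusEps lam ε Q i * (Q i : ℝ) = lam / (n - 1) * (2 * S) := by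
        simp only [S, rPlusEps, mul_sum, sum_mul]
        exact sum_congr rfl fun i _ => sum_congr rfl fun j _ => by ring
    _ ≤ lam / (n - 1) * (M * (n - 1) * ∑ i, (Q i : ℝ)) := by gcongr
    _ = lam * M * ∑ i, (Q i : ℝ) := by field_simp

theorem po2eps_arrival_rate_bound (ε lam : ℝ) (hε0 : 0 ≤ ε) (hε1 : ε ≤ 1)
    (hlam : 0 < lam) (n : ℕ) (hn : 2 ≤ n) (Q : Fin n → ℕ) :
    ∑ i, rPlusEps lam ε Q i * (Q i : ℝ)
      ≤ lam * max 1 (2 * ε) * ∑ i, (Q i : ℝ) :=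
  po2eps_arrival_rate_bound_general ε lam hlam n hn Q
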